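/- arXiv:2008.00389 — 6 statements merged into one kernel-verified Lean document; each statement's English description precedes it below -/
import Mathlib

section
/- For a non-zero polynomial f ∈ ℂ[X] of degree d with leading coefficient a_d and roots α_1,…,α_d, the Mahler measure M(f) = |a_d| ∏_{i=1}^d max(|α_i|,1) satisfies 2^{-d} H(f) ≤ M(f) ≤ √(d+1) · H(f), where H(f) is the maximum of the absolute values of the coefficients of f. -/
open Polynomial

/-- The height of a polynomial: the maximum of the absolute values of its coefficients. -/
noncomputable def polyHeight (f : Polynomial ℂ) : ℝ :=
  ⨆ i : ℕ, ‖f.coeff i‖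

/-- The Mahler measure of `f = a_d ∏ (X - α_i)`: `|a_d| ∏ max(|α_i|, 1)`. -/
noncomputable def mahlerMeasure (f : Polynomial ℂ) : ℝ :=
  ‖f.leadingCoeff‖ * (f.roots.map fun α => max ‖α‖ 1).prod

/-!
Both quantities are Mathlib's: the height is `Polynomial.supNorm` and, by Jensen's formula, the
root product is `Polynomial.mahlerMeasure`. The upper bound is then Landau's inequality
`M(f) ≤ ‖f‖₂` followed by `‖f‖₂ ≤ √(d+1) H(f)`; the lower bound comes from Vieta's formulas,
which give `|a_i| ≤ (d choose i) M(f) ≤ 2^d M(f)`.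
-/

theorem polyHeight_eq_supNorm (f : Polynomial ℂ) : polyHeight f = f.supNorm :=
  f.supNorm_eq_iSup.symm

theorem mahlerMeasure_eq_polynomial_mahlerMeasure (f : Polynomial ℂ) :
    _root_.mahlerMeasure f = f.mahlerMeasure := by
  simp only [_root_.mahlerMeasure, Polynomial.mahlerMeasure_eq_leadingCoeff_mul_prod_roots,
    max_comm]

theorem supNorm_le_two_pow_natDegree_mul_mahlerMeasure (f : Polynomial ℂ) :
    f.supNorm ≤ 2 ^ f.natDegree * f.mahlerMeasure :=
  f.supNorm_le_choose_natDegree_div_two_mul_mahlerMeasure.trans <|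
    mul_le_mul_of_nonneg_right (mod_cast Nat.choose_le_two_pow _ _) f.mahlerMeasure_nonneg

theorem stmt_0_general (f : Polynomial ℂ) :
    (2 : ℝ) ^ (-(f.natDegree : ℤ)) * polyHeight f ≤ _root_.mahlerMeasure f ∧
      _root_.mahlerMeasure f ≤ Real.sqrt ((f.natDegree : ℝ) + 1) * polyHeight f := by
  rw [polyHeight_eq_supNorm, mahlerMeasure_eq_polynomial_mahlerMeasure, zpow_neg, zpow_natCast,
    inv_mul_le_iff₀ (by positivity)]
  exact ⟨supNorm_le_two_pow_natDegree_mul_mahlerMeasure f,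
    mahlerMeasure_le_sqrt_natDegree_add_one_mul_supNorm f⟩

theorem stmt_0 (f : Polynomial ℂ) (hf : f ≠ 0) :
    (2 : ℝ) ^ (-(f.natDegree : ℤ)) * polyHeight f ≤ _root_.mahlerMeasure f ∧
      _root_.mahlerMeasure f ≤ Real.sqrt ((f.natDegree : ℝ) + 1) * polyHeight f :=
  stmt_0_general f
end

section
/- Let f, g ∈ ℂ[X] be non-zero polynomials. Then the absolute value of their resultant satisfies |Res(f,g)| ≤ (√(deg f + 1) · H(f))^{deg g} · (√(deg g + 1) · H(g))^{deg f}, where H denotes the maximum absolute value of the coefficients. -/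
open Polynomial

/-- The Sylvester matrix of two polynomials `f` and `g`, of size
`(deg g + deg f) × (deg g + deg f)`: the first `deg g` rows are the shifted coefficient
vectors of `f` and the remaining `deg f` rows are the shifted coefficient vectors of `g`. -/
noncomputable def sylvesterMatrix {R : Type*} [CommRing R] (f g : Polynomial R) :
    Matrix (Fin (g.natDegree + f.natDegree)) (Fin (g.natDegree + f.natDegree)) R :=
  fun i j =>
    if (i : ℕ) < g.natDegree then
      if (i : ℕ) ≤ (j : ℕ) ∧ (j : ℕ) ≤ (i : ℕ) + f.natDegree then
        f.coeff (f.natDegree + i - j)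
      else 0
    else
      if (i : ℕ) - g.natDegree ≤ (j : ℕ) ∧ (j : ℕ) ≤ ((i : ℕ) - g.natDegree) + g.natDegree then
        g.coeff (g.natDegree + ((i : ℕ) - g.natDegree) - j)
      else 0

/-- The resultant of two polynomials, as the determinant of their Sylvester matrix. -/
noncomputable def resultant {R : Type*} [CommRing R] (f g : Polynomial R) : R :=
  (sylvesterMatrix f g).det

/-!
The resultant is the determinant of the Sylvester matrix, so Hadamard's inequality bounds it by
the product of the Euclidean norms of the rows. Each of the `deg g` rows built from `f` has at most
`deg f + 1` nonzero entries, all of absolute value at most `H(f)`, hence norm at most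
`√(deg f + 1) · H(f)`; symmetrically for the `deg f` rows built from `g`.

Hadamard's inequality comes from Gram–Schmidt: in the orthonormal basis `b` obtained from the rows
`v i`, the coordinate matrix of the rows is triangular with diagonal `⟪b i, v i⟫`, and
`‖⟪b i, v i⟫‖ ≤ ‖v i‖`.
-/

open Finset
open scoped InnerProductSpace

theorem Matrix.norm_det_le_prod_sqrt_sum_sq_fin {𝕜 : Type*} [RCLike 𝕜] {n : ℕ}
    (A : Matrix (Fin n) (Fin n) 𝕜) :
    ‖A.det‖ ≤ ∏ i, Real.sqrt (∑ j, ‖A i j‖ ^ 2) := by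
  let v : Fin n → EuclideanSpace 𝕜 (Fin n) := fun i => WithLp.toLp 2 (A i)
  have hdim : Module.finrank 𝕜 (EuclideanSpace 𝕜 (Fin n)) = Fintype.card (Fin n) := by simp
  let b := InnerProductSpace.gramSchmidtOrthonormalBasis hdim v
  let e := EuclideanSpace.basisFun (Fin n) 𝕜
  have he : e.toBasis.det v = A.det := by
    rw [Module.Basis.det_apply, ← Matrix.det_transpose]
    congr 1
  have hchange : e.toBasis.det v = e.toBasis.det b.toBasis * b.toBasis.det v := by
    simp only [Module.Basis.det_apply, ← Matrix.det_mul, Module.Basis.toMatrix_mul_toMatrix]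
  have hunit : ‖e.toBasis.det b.toBasis‖ = 1 := e.det_to_matrix_orthonormalBasis b
  rw [← he, hchange, norm_mul, hunit, one_mul,
    InnerProductSpace.gramSchmidtOrthonormalBasis_det, norm_prod]
  refine prod_le_prod (fun i _ => norm_nonneg _) fun i _ => ?_
  calc ‖⟪b i, v i⟫_𝕜‖ ≤ ‖b i‖ * ‖v i‖ := norm_inner_le_norm _ _
    _ = Real.sqrt (∑ j, ‖A i j‖ ^ 2) := by
      rw [b.orthonormal.1 i, one_mul, EuclideanSpace.norm_eq]

theorem Matrix.norm_det_le_prod_sqrt_sum_sq {𝕜 ι : Type*} [RCLike 𝕜] [Fintype ι]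
    [DecidableEq ι] (A : Matrix ι ι 𝕜) :
    ‖A.det‖ ≤ ∏ i, Real.sqrt (∑ j, ‖A i j‖ ^ 2) := by
  let e := Fintype.equivFin ι
  calc ‖A.det‖ = ‖(Matrix.reindex e e A).det‖ := by rw [Matrix.det_reindex_self]
    _ ≤ ∏ i, Real.sqrt (∑ j, ‖A (e.symm i) (e.symm j)‖ ^ 2) :=
      Matrix.norm_det_le_prod_sqrt_sum_sq_fin _
    _ = ∏ i, Real.sqrt (∑ j, ‖A i j‖ ^ 2) :=
      (Fintype.prod_equiv e _ _ fun i => by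
        rw [Equiv.symm_apply_apply, e.symm.sum_comp fun j => ‖A i j‖ ^ 2]).symm

theorem norm_coeff_le_polyHeight (f : Polynomial ℂ) (k : ℕ) : ‖f.coeff k‖ ≤ polyHeight f := by
  have hfin :
      (Set.range fun i => ‖f.coeff i‖) ⊆ insert 0 ((fun i => ‖f.coeff i‖) '' f.support) := by
    rintro _ ⟨i, rfl⟩
    by_cases hi : i ∈ f.support
    · exact Or.inr ⟨i, hi, rfl⟩
    · simp [notMem_support_iff.mp hi]
  exact le_ciSup (((f.support.finite_toSet.image _).insert 0).subset hfin).bddAbove k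

theorem polyHeight_nonneg (f : Polynomial ℂ) : 0 ≤ polyHeight f :=
  (norm_nonneg _).trans (norm_coeff_le_polyHeight f 0)

theorem sqrt_sum_sq_norm_le_of_support_subset {ι E : Type*} [Fintype ι]
    [SeminormedAddCommGroup E] {r : ι → E} {s : Finset ι} {H : ℝ} (hH : 0 ≤ H)
    (hsupp : ∀ j ∉ s, r j = 0) (hbd : ∀ j ∈ s, ‖r j‖ ≤ H) :
    Real.sqrt (∑ j, ‖r j‖ ^ 2) ≤ Real.sqrt #s * H := by
  have hsum : ∑ j, ‖r j‖ ^ 2 ≤ #s * H ^ 2 := by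
    rw [← sum_subset s.subset_univ fun j _ hj => by simp [hsupp j hj], ← nsmul_eq_mul]
    exact sum_le_card_nsmul _ _ _ fun j hj => pow_le_pow_left₀ (norm_nonneg _) (hbd j hj) 2
  calc Real.sqrt (∑ j, ‖r j‖ ^ 2) ≤ Real.sqrt (#s * H ^ 2) := Real.sqrt_le_sqrt hsum
    _ = Real.sqrt #s * H := by rw [Real.sqrt_mul (Nat.cast_nonneg _), Real.sqrt_sq hH]

theorem Fin.card_filter_mem_Icc_le (N a m : ℕ) :
    #{j : Fin N | (j : ℕ) ∈ Icc a (a + m)} ≤ m + 1 := by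
  calc #{j : Fin N | (j : ℕ) ∈ Icc a (a + m)} ≤ #(Icc a (a + m)) :=
        card_le_card_of_injOn Fin.val (fun j hj => (mem_filter.mp hj).2)
          Fin.val_injective.injOn
    _ = m + 1 := by rw [Nat.card_Icc]; omega

theorem sqrt_sum_sq_norm_band_le {E : Type*} [SeminormedAddCommGroup E] {N : ℕ}
    (a m : ℕ) (c : Fin N → E) {H : ℝ} (hH : 0 ≤ H) (hc : ∀ j, ‖c j‖ ≤ H) :
    Real.sqrt (∑ j : Fin N, ‖if a ≤ (j : ℕ) ∧ (j : ℕ) ≤ a + m then c j else 0‖ ^ 2) ≤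
      Real.sqrt (m + 1) * H := by
  refine (sqrt_sum_sq_norm_le_of_support_subset (s := {j : Fin N | (j : ℕ) ∈ Icc a (a + m)}) hH
    (fun j hj => ?_) fun j _ => ?_).trans ?_
  · simp_all
  · split <;> simp [hc, hH]
  · gcongr
    exact_mod_cast Fin.card_filter_mem_Icc_le N a m

theorem sqrt_sum_sq_norm_sylvesterMatrix_le (f g : Polynomial ℂ)
    (i : Fin (g.natDegree + f.natDegree)) :
    Real.sqrt (∑ j, ‖sylvesterMatrix f g i j‖ ^ 2) ≤
      if (i : ℕ) < g.natDegree then Real.sqrt ((f.natDegree : ℝ) + 1) * polyHeight f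
      else Real.sqrt ((g.natDegree : ℝ) + 1) * polyHeight g := by
  split_ifs with hi
  · simpa only [sylvesterMatrix, if_pos hi] using sqrt_sum_sq_norm_band_le i f.natDegree _
      (polyHeight_nonneg f) fun j => norm_coeff_le_polyHeight f (f.natDegree + i - j)
  · simpa only [sylvesterMatrix, if_neg hi] using sqrt_sum_sq_norm_band_le (i - g.natDegree)
      g.natDegree _ (polyHeight_nonneg g)
      fun j => norm_coeff_le_polyHeight g (g.natDegree + (i - g.natDegree) - j)

theorem Fin.prod_ite_val_lt {M : Type*} [CommMonoid M] (n m : ℕ) (x y : M) :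
    ∏ i : Fin (n + m), (if (i : ℕ) < n then x else y) = x ^ n * y ^ m := by
  simp [Fin.prod_univ_add]

theorem stmt_2_general (f g : Polynomial ℂ) :
    ‖_root_.resultant f g‖ ≤
      (Real.sqrt ((f.natDegree : ℝ) + 1) * polyHeight f) ^ g.natDegree *
        (Real.sqrt ((g.natDegree : ℝ) + 1) * polyHeight g) ^ f.natDegree := by
  calc ‖_root_.resultant f g‖
      ≤ ∏ i, Real.sqrt (∑ j, ‖sylvesterMatrix f g i j‖ ^ 2) :=
        Matrix.norm_det_le_prod_sqrt_sum_sq _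
    _ ≤ ∏ i : Fin (g.natDegree + f.natDegree), if (i : ℕ) < g.natDegree
          then Real.sqrt ((f.natDegree : ℝ) + 1) * polyHeight f
          else Real.sqrt ((g.natDegree : ℝ) + 1) * polyHeight g :=
        prod_le_prod (fun _ _ => Real.sqrt_nonneg _)
          fun i _ => sqrt_sum_sq_norm_sylvesterMatrix_le f g i
    _ = _ := Fin.prod_ite_val_lt _ _ _ _

theorem stmt_2 (f g : Polynomial ℂ) (hf : f ≠ 0) (hg : g ≠ 0) :
    ‖_root_.resultant f g‖ ≤
      (Real.sqrt ((f.natDegree : ℝ) + 1) * polyHeight f) ^ g.natDegree *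
        (Real.sqrt ((g.natDegree : ℝ) + 1) * polyHeight g) ^ f.natDegree :=
  stmt_2_general f g
end

section
/- Let p be a prime and let f, g ∈ ℤ[X] be non-zero polynomials such that their reductions modulo p do not both vanish. If the reductions of f and g modulo p have m common roots in the algebraic closure of 𝔽_p, counted with multiplicities, then m ≤ v_p(Res(f,g)), where v_p denotes the p-adic valuation. -/
open Polynomial
open scoped Classical

/-!
Over `𝔽_p` let `d = gcd(f̄, ḡ)`, of degree `r`. Over `𝔽̄_p` the multiplicity of a root of `d`
is the minimum of its multiplicities in `f̄` and `ḡ`, so `r = m` (if `f̄` or `ḡ` vanishes, `m = 0`).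

Rows `i < deg g` of the Sylvester matrix are the coefficient vectors of `Xⁱ · rev f`, the others
those of `Xⁱ · rev g`. So a row vector `(u, w)` with `deg u < deg g`, `deg w < deg f` lies in the
left kernel of the matrix mod `p` iff `u · rev f̄ + w · rev ḡ = 0`. Writing `f̄ = d f₁`,
`ḡ = d g₁`, the pairs `(q · rev g₁, -q · rev f₁)` with `deg q < r` form an `r`-dimensional
subspace of that kernel.

Finally, if the kernel of `M mod p` has dimension `k`, complete a basis of it to an invertible
matrix `B` mod `p` and lift `B` to `ℤ`: then `k` rows of `B M` are divisible by `p`, so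
`p ^ k ∣ det B · det M` with `p ∤ det B`.
-/

namespace Polynomial

section Semiring

variable {R : Type*} [Semiring R]

theorem coeff_X_pow_mul_reflect {q : R[X]} {N : ℕ} (hq : q.natDegree ≤ N) (a j : ℕ) :
    (X ^ a * reflect N q).coeff j = if a ≤ j ∧ j ≤ a + N then q.coeff (N + a - j) else 0 := by
  rw [coeff_X_pow_mul', coeff_reflect]
  by_cases haj : a ≤ j
  · by_cases hjN : j ≤ a + N
    · rw [if_pos haj, if_pos ⟨haj, hjN⟩, revAt_le (by omega)]
      congr 1
      omega
    · rw [if_pos haj, if_neg (by tauto), revAt_eq_self_of_lt (by omega),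
        coeff_eq_zero_of_natDegree_lt (by omega)]
  · rw [if_neg haj, if_neg (by tauto)]

theorem sum_fin_coeff_mul_coeff_X_pow_mul {u : R[X]} {n : ℕ} (hu : u.degree < n) (q : R[X])
    (j : ℕ) : ∑ i : Fin n, u.coeff i * (X ^ (i : ℕ) * q).coeff j = (u * q).coeff j := by
  rcases eq_or_ne u 0 with rfl | hu0
  · simp
  conv_rhs => rw [as_sum_range' u n ((natDegree_lt_iff_degree_lt hu0).mpr hu)]
  rw [Finset.sum_mul, finsetSum_coeff, ← Fin.sum_univ_eq_sum_range]
  refine Finset.sum_congr rfl fun i _ => ?_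
  rw [← C_mul_X_pow_eq_monomial, mul_assoc, coeff_C_mul]

theorem degree_mul_lt_of_lt_of_natDegree_le {p q : R[X]} {a b : ℕ} (hp : p.degree < a)
    (hq : q.natDegree ≤ b) : (p * q).degree < ↑(a + b) := by
  rcases eq_or_ne p 0 with rfl | hp0
  · simp
  calc (p * q).degree ≤ ↑(p * q).natDegree := degree_le_natDegree
    _ ≤ ↑(p.natDegree + q.natDegree) := by exact_mod_cast natDegree_mul_le
    _ < ↑(a + b) := by
      have := (natDegree_lt_iff_degree_lt hp0).mpr hp
      exact_mod_cast (by omega : p.natDegree + q.natDegree < a + b)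

end Semiring

theorem reflect_mul_of_natDegree_mul_le {R : Type*} [CommSemiring R] [NoZeroDivisors R]
    {d q : R[X]} {N : ℕ} (hd : d ≠ 0) (hN : (d * q).natDegree ≤ N) :
    reflect N (d * q) = reflect (N - d.natDegree) q * reflect d.natDegree d := by
  rcases eq_or_ne q 0 with rfl | hq
  · simp
  rw [natDegree_mul hd hq] at hN
  rw [mul_comm d q, ← reflect_mul q d (by omega) le_rfl, Nat.sub_add_cancel (by omega)]

section Field

variable {K : Type*} [Field K]

theorem rootMultiplicity_gcd (a : K) {f g : K[X]} (hf : f ≠ 0) (hg : g ≠ 0) :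
    rootMultiplicity a (EuclideanDomain.gcd f g)
      = min (rootMultiplicity a f) (rootMultiplicity a g) := by
  have hd : EuclideanDomain.gcd f g ≠ 0 := fun h => hf (EuclideanDomain.gcd_eq_zero_iff.mp h).1
  apply le_antisymm
  · exact le_min
      ((le_rootMultiplicity_iff hf).mpr
        ((pow_rootMultiplicity_dvd _ a).trans (EuclideanDomain.gcd_dvd_left f g)))
      ((le_rootMultiplicity_iff hg).mpr
        ((pow_rootMultiplicity_dvd _ a).trans (EuclideanDomain.gcd_dvd_right f g)))
  · rw [le_rootMultiplicity_iff hd]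
    exact EuclideanDomain.dvd_gcd
      ((pow_dvd_pow _ (min_le_left _ _)).trans (pow_rootMultiplicity_dvd f a))
      ((pow_dvd_pow _ (min_le_right _ _)).trans (pow_rootMultiplicity_dvd g a))

theorem roots_gcd {f g : K[X]} (hf : f ≠ 0) (hg : g ≠ 0) :
    (EuclideanDomain.gcd f g).roots = f.roots ∩ g.roots := by
  ext a
  rw [Multiset.count_inter, count_roots, count_roots, count_roots, rootMultiplicity_gcd a hf hg]

theorem card_roots_map_inter_roots_map {L : Type*} [Field L] [IsAlgClosed L] (i : K →+* L)
    {f g : K[X]} (hf : f ≠ 0) (hg : g ≠ 0) :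
    Multiset.card ((f.map i).roots ∩ (g.map i).roots) = (EuclideanDomain.gcd f g).natDegree := by
  rw [← roots_gcd (map_ne_zero hf) (map_ne_zero hg), gcd_map,
    splits_iff_card_roots.mp (IsAlgClosed.splits (k := L) _), natDegree_map]

end Field

end Polynomial

section Sylvester

noncomputable def appendCoeffs {R : Type*} [CommRing R] (m n : ℕ) :
    R[X] × R[X] →ₗ[R] Fin (m + n) → R where
  toFun uw := Fin.append (fun i => uw.1.coeff i) (fun i => uw.2.coeff i)
  map_add' uw uw' := by
    ext i
    refine Fin.addCases (fun i => ?_) (fun i => ?_) i <;> simp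
  map_smul' c uw := by
    ext i
    refine Fin.addCases (fun i => ?_) (fun i => ?_) i <;> simp

theorem appendCoeffs_castAdd {R : Type*} [CommRing R] (m n : ℕ) (uw : R[X] × R[X]) (i : Fin m) :
    appendCoeffs m n uw (Fin.castAdd n i) = uw.1.coeff i :=
  Fin.append_left (fun i : Fin m => uw.1.coeff i) (fun i : Fin n => uw.2.coeff i) i

theorem appendCoeffs_natAdd {R : Type*} [CommRing R] (m n : ℕ) (uw : R[X] × R[X]) (i : Fin n) :
    appendCoeffs m n uw (Fin.natAdd m i) = uw.2.coeff i :=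
  Fin.append_right (fun i : Fin m => uw.1.coeff i) (fun i : Fin n => uw.2.coeff i) i

variable {R S : Type*} [CommRing R] [CommRing S] (φ : R →+* S) (f g : R[X])

theorem sylvesterMatrix_map_castAdd (i : Fin g.natDegree) (j : Fin (g.natDegree + f.natDegree)) :
    (sylvesterMatrix f g).map φ (Fin.castAdd f.natDegree i) j
      = (X ^ (i : ℕ) * reflect f.natDegree (f.map φ)).coeff j := by
  rw [coeff_X_pow_mul_reflect natDegree_map_le]
  simp only [Matrix.map_apply, sylvesterMatrix, Fin.val_castAdd, i.isLt, if_true]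
  split_ifs <;> simp [coeff_map]

theorem sylvesterMatrix_map_natAdd (i : Fin f.natDegree) (j : Fin (g.natDegree + f.natDegree)) :
    (sylvesterMatrix f g).map φ (Fin.natAdd g.natDegree i) j
      = (X ^ (i : ℕ) * reflect g.natDegree (g.map φ)).coeff j := by
  rw [coeff_X_pow_mul_reflect natDegree_map_le]
  simp only [Matrix.map_apply, sylvesterMatrix, Fin.val_natAdd, Nat.add_sub_cancel_left]
  rw [if_neg (by omega)]
  split_ifs <;> simp [coeff_map]

theorem vecMul_sylvesterMatrix_map {u w : S[X]} (hu : u.degree < g.natDegree)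
    (hw : w.degree < f.natDegree) :
    Matrix.vecMul (appendCoeffs g.natDegree f.natDegree (u, w)) ((sylvesterMatrix f g).map φ)
      = fun j : Fin _ =>
          (u * reflect f.natDegree (f.map φ) + w * reflect g.natDegree (g.map φ)).coeff j := by
  ext j
  simp only [Matrix.vecMul, dotProduct, Fin.sum_univ_add, appendCoeffs_castAdd, appendCoeffs_natAdd,
    sylvesterMatrix_map_castAdd, sylvesterMatrix_map_natAdd, coeff_add,
    sum_fin_coeff_mul_coeff_X_pow_mul hu, sum_fin_coeff_mul_coeff_X_pow_mul hw]

end Sylvester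

theorem le_finrank_ker_sylvesterMatrix_of_mul_eq {R F : Type*} [CommRing R] [Field F]
    (φ : R →+* F) (f g : R[X]) {a b : F[X]} {r : ℕ} (ha : a ≠ 0)
    (hra : r + a.natDegree ≤ g.natDegree) (hrb : r + b.natDegree ≤ f.natDegree)
    (hab : reflect f.natDegree (f.map φ) * a = reflect g.natDegree (g.map φ) * b) :
    r ≤ Module.finrank F (LinearMap.ker ((sylvesterMatrix f g).map φ).vecMulLinear) := by
  let L : F[X] →ₗ[F] Fin (g.natDegree + f.natDegree) → F :=
    appendCoeffs g.natDegree f.natDegree ∘ₗ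
      (LinearMap.mulRight F a).prod (-LinearMap.mulRight F b)
  have hL : ∀ q, L q = appendCoeffs g.natDegree f.natDegree (q * a, -(q * b)) := fun q => rfl
  have hdeg_a : ∀ q ∈ degreeLT F r, (q * a).degree < g.natDegree := fun q hq =>
    (degree_mul_lt_of_lt_of_natDegree_le (mem_degreeLT.mp hq) le_rfl).trans_le
      (by exact_mod_cast hra)
  have hdeg_b : ∀ q ∈ degreeLT F r, (-(q * b)).degree < f.natDegree := fun q hq => by
    rw [degree_neg]
    exact (degree_mul_lt_of_lt_of_natDegree_le (mem_degreeLT.mp hq) le_rfl).trans_le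
      (by exact_mod_cast hrb)
  have hrange : LinearMap.range (L.domRestrict (degreeLT F r))
      ≤ LinearMap.ker ((sylvesterMatrix f g).map φ).vecMulLinear := by
    rintro _ ⟨⟨q, hq⟩, rfl⟩
    rw [LinearMap.mem_ker, Matrix.vecMulLinear_apply, LinearMap.domRestrict_apply, hL,
      vecMul_sylvesterMatrix_map φ f g (hdeg_a q hq) (hdeg_b q hq)]
    have hzero : q * a * reflect f.natDegree (f.map φ) + -(q * b) * reflect g.natDegree (g.map φ)
        = 0 := by
      linear_combination q * hab
    rw [hzero]
    ext j
    exact coeff_zero _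
  have hinj : Function.Injective (L.domRestrict (degreeLT F r)) := by
    rw [← LinearMap.ker_eq_bot, LinearMap.ker_eq_bot']
    rintro ⟨q, hq⟩ hLq
    have hqa : q * a = 0 := by
      ext k
      by_cases hk : k < g.natDegree
      · have := congrFun hLq (Fin.castAdd f.natDegree ⟨k, hk⟩)
        rwa [LinearMap.domRestrict_apply, hL, appendCoeffs_castAdd] at this
      · exact coeff_eq_zero_of_degree_lt ((hdeg_a q hq).trans_le (by exact_mod_cast not_lt.mp hk))
    exact Subtype.ext ((mul_eq_zero.mp hqa).resolve_right ha)
  calc r = Module.finrank F (degreeLT F r) := by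
        rw [(degreeLTEquiv F r).finrank_eq, Module.finrank_fin_fun]
    _ = Module.finrank F (LinearMap.range (L.domRestrict (degreeLT F r))) :=
        (LinearMap.finrank_range_of_inj hinj).symm
    _ ≤ _ := Submodule.finrank_mono hrange

theorem natDegree_gcd_le_finrank_ker_sylvesterMatrix {R F : Type*} [CommRing R] [Field F]
    (φ : R →+* F) (f g : R[X]) (hf : f.map φ ≠ 0) (hg : g.map φ ≠ 0) :
    (EuclideanDomain.gcd (f.map φ) (g.map φ)).natDegree
      ≤ Module.finrank F (LinearMap.ker ((sylvesterMatrix f g).map φ).vecMulLinear) := by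
  set d := EuclideanDomain.gcd (f.map φ) (g.map φ)
  have hd : d ≠ 0 := fun h => hf (EuclideanDomain.gcd_eq_zero_iff.mp h).1
  obtain ⟨f₁, hf₁⟩ : d ∣ f.map φ := EuclideanDomain.gcd_dvd_left _ _
  obtain ⟨g₁, hg₁⟩ : d ∣ g.map φ := EuclideanDomain.gcd_dvd_right _ _
  have hf₁0 : f₁ ≠ 0 := by rintro rfl; exact hf (by rw [hf₁, mul_zero])
  have hg₁0 : g₁ ≠ 0 := by rintro rfl; exact hg (by rw [hg₁, mul_zero])
  have hfdeg : (d * f₁).natDegree ≤ f.natDegree := hf₁ ▸ natDegree_map_le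
  have hgdeg : (d * g₁).natDegree ≤ g.natDegree := hg₁ ▸ natDegree_map_le
  have hreflf := reflect_mul_of_natDegree_mul_le hd hfdeg
  have hreflg := reflect_mul_of_natDegree_mul_le hd hgdeg
  rw [← hf₁] at hreflf
  rw [← hg₁] at hreflg
  rw [natDegree_mul hd hf₁0] at hfdeg
  rw [natDegree_mul hd hg₁0] at hgdeg
  refine le_finrank_ker_sylvesterMatrix_of_mul_eq φ f g
    (a := reflect (g.natDegree - d.natDegree) g₁) (b := reflect (f.natDegree - d.natDegree) f₁)
    (by simpa [reflect_eq_zero_iff] using hg₁0) ?_ ?_ (by rw [hreflf, hreflg]; ring)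
  · have := natDegree_reflect_le (N := g.natDegree - d.natDegree) (p := g₁)
    omega
  · have := natDegree_reflect_le (N := f.natDegree - d.natDegree) (p := f₁)
    omega

theorem Module.Basis.sumExtend_inl {K V ι : Type*} [Field K] [AddCommGroup V] [Module K V]
    {v : ι → V} (hs : LinearIndependent K v) (i : ι) :
    Module.Basis.sumExtend hs (Sum.inl i) = v i := by
  simp only [Module.Basis.sumExtend, Module.Basis.reindex_apply, Module.Basis.coe_extend]
  rfl

namespace Matrix

variable {n : Type*} [Fintype n] [DecidableEq n]

theorem pow_card_dvd_det_of_dvd_rows {R : Type*} [CommRing R] (A : Matrix n n R) (a : R)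
    (S : Finset n) (h : ∀ i ∈ S, ∀ j, a ∣ A i j) : a ^ S.card ∣ A.det := by
  choose D hD using h
  let D' : Matrix n n R := fun i j => if hi : i ∈ S then D i hi j else A i j
  have hA : A = of fun i j => (if i ∈ S then a else 1) * D' i j := by
    ext i j
    by_cases hi : i ∈ S <;> simp [D', hi, hD]
  refine ⟨D'.det, ?_⟩
  rw [hA, det_mul_column, Finset.prod_ite_mem, Finset.univ_inter, Finset.prod_const]

theorem exists_isUnit_det_rows_mem {F : Type*} [Field F] (K : Submodule F (n → F)) :
    ∃ (B : Matrix n n F) (S : Finset n), IsUnit B.det ∧ S.card = Module.finrank F K ∧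
      ∀ i ∈ S, B i ∈ K := by
  let v : Fin (Module.finrank F K) → n → F := K.subtype ∘ Module.finBasis F K
  have hv : LinearIndependent F v :=
    (Module.finBasis F K).linearIndependent.map' K.subtype K.ker_subtype
  let b := Module.Basis.sumExtend hv
  let e := b.indexEquiv (Pi.basisFun F n)
  refine ⟨of fun i => b (e.symm i), Finset.univ.map (Function.Embedding.inl.trans e.toEmbedding),
    ?_, by simp, ?_⟩
  · rw [← isUnit_iff_isUnit_det, ← linearIndependent_rows_iff_isUnit]
    exact b.linearIndependent.comp _ e.symm.injective
  · intro i hi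
    obtain ⟨s, -, rfl⟩ := Finset.mem_map.mp hi
    show b (e.symm (e (Sum.inl s))) ∈ K
    rw [e.symm_apply_apply, Module.Basis.sumExtend_inl]
    exact (Module.finBasis F K s).2

theorem pow_dvd_det_of_rows_mul_map_eq_zero (p : ℕ) [Fact p.Prime] (M B : Matrix n n ℤ)
    (hB : IsUnit (B.map (Int.cast : ℤ → ZMod p)).det) (S : Finset n)
    (hS : ∀ i ∈ S, (B * M).map (Int.cast : ℤ → ZMod p) i = 0) :
    (p : ℤ) ^ S.card ∣ M.det := by
  have hdvd : (p : ℤ) ^ S.card ∣ B.det * M.det := by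
    rw [← det_mul]
    refine pow_card_dvd_det_of_dvd_rows _ _ S fun i hi j => ?_
    rw [← ZMod.intCast_zmod_eq_zero_iff_dvd]
    exact congrFun (hS i hi) j
  have hBp : ¬ (p : ℤ) ∣ B.det := by
    rw [← ZMod.intCast_zmod_eq_zero_iff_dvd, Int.cast_det]
    exact hB.ne_zero
  have hprime : Prime (p : ℤ) := Nat.prime_iff_prime_int.mp Fact.out
  exact (hprime.irreducible.coprime_iff_not_dvd.mpr hBp).pow_left.dvd_of_dvd_mul_left hdvd

theorem pow_finrank_ker_dvd_det (p : ℕ) [Fact p.Prime] (M : Matrix n n ℤ) :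
    (p : ℤ) ^ Module.finrank (ZMod p)
        (LinearMap.ker (M.map (Int.cast : ℤ → ZMod p)).vecMulLinear) ∣ M.det := by
  obtain ⟨B, S, hB, hS, hBK⟩ := exists_isUnit_det_rows_mem
    (LinearMap.ker (M.map (Int.cast : ℤ → ZMod p)).vecMulLinear)
  let B' : Matrix n n ℤ := B.map fun x => (x.cast : ℤ)
  have hB' : B'.map (Int.cast : ℤ → ZMod p) = B := by
    ext i j
    exact ZMod.intCast_zmod_cast (B i j)
  rw [← hS]
  refine pow_dvd_det_of_rows_mul_map_eq_zero p M B' (hB' ▸ hB) S fun i hi => ?_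
  have hmul : (B' * M).map (Int.cast : ℤ → ZMod p) = B * M.map Int.cast := by
    rw [← hB']
    exact Matrix.map_mul (f := Int.castRingHom (ZMod p))
  rw [hmul, mul_apply_eq_vecMul]
  exact hBK i hi

end Matrix

theorem stmt_3_general (p : ℕ) [hp : Fact p.Prime] (f g : Polynomial ℤ)
    (m : ℕ)
    (hm : m = Multiset.card
      ((f.map (Int.castRingHom (AlgebraicClosure (ZMod p)))).roots ∩
        (g.map (Int.castRingHom (AlgebraicClosure (ZMod p)))).roots)) :
    (p : ℤ) ^ m ∣ _root_.resultant f g := by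
  have hmap : ∀ q : ℤ[X], q.map (Int.castRingHom (AlgebraicClosure (ZMod p)))
      = (q.map (Int.castRingHom (ZMod p))).map (algebraMap (ZMod p) _) := fun q => by
    rw [map_map, RingHom.ext_int (Int.castRingHom _) ((algebraMap (ZMod p) _).comp _)]
  by_cases hf : f.map (Int.castRingHom (ZMod p)) = 0
  · simp [hm, hmap f, hf]
  by_cases hg : g.map (Int.castRingHom (ZMod p)) = 0
  · simp [hm, hmap g, hg]
  rw [hm, hmap, hmap, card_roots_map_inter_roots_map _ hf hg]
  exact (pow_dvd_pow _ (natDegree_gcd_le_finrank_ker_sylvesterMatrix _ f g hf hg)).trans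
    (Matrix.pow_finrank_ker_dvd_det p _)

/-- If the reductions of `f, g ∈ ℤ[X]` modulo a prime `p` do not both vanish and have `m`
common roots in `𝔽̄_p` counted with multiplicity (i.e. the minimum of the two multiplicities
at each common root, which is the cardinality of the intersection of the two root multisets),
then `m ≤ v_p(Res(f,g))`, i.e. `p^m` divides the resultant of `f` and `g`. -/
theorem stmt_3 (p : ℕ) [hp : Fact p.Prime] (f g : Polynomial ℤ) (hf : f ≠ 0) (hg : g ≠ 0)
    (hnot : ¬(f.map (Int.castRingHom (ZMod p)) = 0 ∧ g.map (Int.castRingHom (ZMod p)) = 0))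
    (m : ℕ)
    (hm : m = Multiset.card
      ((f.map (Int.castRingHom (AlgebraicClosure (ZMod p)))).roots ∩
        (g.map (Int.castRingHom (AlgebraicClosure (ZMod p)))).roots)) :
    (p : ℤ) ^ m ∣ _root_.resultant f g :=
  stmt_3_general p (hp := hp) f g m hm
end

section
/- Let E be an elliptic curve defined by Y² = X³ + aX + b over ℚ, and let Ψ_n be the univariate division polynomials (Ψ_n = ψ_n if n is odd, Ψ_n = ψ_n/Y if n is even). There exists an effectively computable constant c depending only on E such that h(Ψ_n) ≤ c·n² for all integers n ≥ 1, where h denotes the logarithmic height (log of the maximum absolute value of the coefficients, or 0 if that is < 1). -/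
open Polynomial

/-- The logarithmic height of a polynomial with rational coefficients:
`h(f) = max (0, log H(f))` where `H(f)` is the maximum absolute value of the coefficients. -/
noncomputable def polyLogHeight (f : Polynomial ℚ) : ℝ :=
  max 0 (Real.log (⨆ i : ℕ, |((f.coeff i : ℚ) : ℝ)|))

/-- The univariate division polynomial `Ψₙ` of the paper: `ψₙ` for odd `n` and `ψₙ/Y` for
even `n`; in terms of Mathlib's `preΨ'` (where `ψₙ = preΨ'ₙ · 2Y` for even `n` on a short
Weierstrass curve), it is `preΨ'ₙ` for odd `n` and `2 · preΨ'ₙ` for even `n`. -/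
noncomputable def paperPsi (W : WeierstrassCurve ℚ) (n : ℕ) : Polynomial ℚ :=
  if Odd n then W.preΨ' n else 2 * W.preΨ' n

/-!
For `n ≥ 7` the recursion writes `Ψₙ` as a difference of two products of four earlier terms `Ψₖ`
with `k ≈ n / 2`. If a submultiplicative seminorm `v` satisfies `v Ψₖ ≤ B ^ (k (k - 1))` for all
smaller `k`, the exponents of both products add up to less than `n (n - 1)`, and the factor `2`
coming from the difference is absorbed by `B ≥ 2`. For the `ℓ¹`-norm of the coefficient vector
this gives `h(Ψₙ) ≤ log 2 + n (n - 1) log B`.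
-/

namespace Polynomial

variable {R : Type*} [SeminormedRing R]

noncomputable def l1Norm (p : R[X]) : ℝ :=
  p.sum fun _ a => ‖a‖

theorem l1Norm_eq_sum_of_support_subset {p : R[X]} {s : Finset ℕ} (hs : p.support ⊆ s) :
    p.l1Norm = ∑ n ∈ s, ‖p.coeff n‖ :=
  sum_eq_of_subset _ (fun _ => norm_zero) hs

theorem norm_coeff_le_l1Norm (p : R[X]) (n : ℕ) : ‖p.coeff n‖ ≤ p.l1Norm := by
  rw [l1Norm_eq_sum_of_support_subset (Finset.subset_union_left (s₂ := {n}))]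
  exact Finset.single_le_sum (fun _ _ => norm_nonneg _) (by simp)

@[simp]
theorem l1Norm_monomial (n : ℕ) (a : R) : (monomial n a).l1Norm = ‖a‖ :=
  sum_monomial_index _ _ norm_zero

@[simp]
theorem l1Norm_C (a : R) : (C a).l1Norm = ‖a‖ :=
  l1Norm_monomial 0 a

theorem l1Norm_add_le (p q : R[X]) : (p + q).l1Norm ≤ p.l1Norm + q.l1Norm := by
  rw [l1Norm_eq_sum_of_support_subset support_add,
    l1Norm_eq_sum_of_support_subset (p := p) Finset.subset_union_left,
    l1Norm_eq_sum_of_support_subset (p := q) Finset.subset_union_right, ← Finset.sum_add_distrib]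
  exact Finset.sum_le_sum fun n _ => (coeff_add p q n).symm ▸ norm_add_le _ _

theorem l1Norm_mul_le (p q : R[X]) : (p * q).l1Norm ≤ p.l1Norm * q.l1Norm := by
  have subadd :=
    Finset.le_sum_of_subadditive (ι := ℕ) (l1Norm (R := R)) (by simp [l1Norm]) l1Norm_add_le
  calc (p * q).l1Norm
      = (∑ i ∈ p.support, ∑ j ∈ q.support, monomial (i + j) (p.coeff i * q.coeff j)).l1Norm := by
        rw [mul_eq_sum_sum]; rfl
    _ ≤ ∑ i ∈ p.support, ∑ j ∈ q.support, ‖p.coeff i * q.coeff j‖ :=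
        (subadd _ _).trans <| Finset.sum_le_sum fun i _ => (subadd _ _).trans_eq (by simp)
    _ ≤ ∑ i ∈ p.support, ∑ j ∈ q.support, ‖p.coeff i‖ * ‖q.coeff j‖ := by
        gcongr; exact norm_mul_le _ _
    _ = p.l1Norm * q.l1Norm := (Finset.sum_mul_sum _ _ _ _).symm

noncomputable def l1Seminorm : RingSeminorm R[X] where
  toFun := l1Norm
  map_zero' := by simp [l1Norm]
  add_le' := l1Norm_add_le
  neg' p := by simp [l1Norm, sum_def]
  mul_le' := l1Norm_mul_le

@[simp]
theorem l1Seminorm_apply (p : R[X]) : (l1Seminorm : RingSeminorm R[X]) p = p.l1Norm := rfl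

end Polynomial

namespace RingSeminorm

variable {R : Type*} [CommRing R] (v : RingSeminorm R) {B : ℝ}

theorem map_mul_le_pow_add {x y : R} {i j : ℕ} (hx : v x ≤ B ^ i) (hy : v y ≤ B ^ j) :
    v (x * y) ≤ B ^ (i + j) :=
  (map_mul_le_mul v x y).trans <| (pow_add B i j).symm ▸
    mul_le_mul hx hy (apply_nonneg v y) ((apply_nonneg v x).trans hx)

theorem map_pow_le_pow_mul {x : R} {i k : ℕ} (hk : k ≠ 0) (hx : v x ≤ B ^ i) :
    v (x ^ k) ≤ B ^ (i * k) :=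
  (map_pow_le_pow v x hk).trans <|
    (pow_le_pow_left₀ (apply_nonneg v x) hx k).trans_eq (pow_mul B i k).symm

theorem map_sub_le_pow {x y : R} {i j k : ℕ} (hB : 2 ≤ B) (hx : v x ≤ B ^ i) (hy : v y ≤ B ^ j)
    (hi : i < k) (hj : j < k) : v (x - y) ≤ B ^ k := by
  have hB1 : 1 ≤ B := by linarith
  calc v (x - y) ≤ v x + v y := map_sub_le_add v x y
    _ ≤ B ^ (k - 1) + B ^ (k - 1) := by
        gcongr
        · exact hx.trans (pow_le_pow_right₀ hB1 (by omega))
        · exact hy.trans (pow_le_pow_right₀ hB1 (by omega))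
    _ ≤ B * B ^ (k - 1) := by nlinarith [pow_nonneg (zero_le_two.trans hB) (k - 1)]
    _ = B ^ k := by rw [← pow_succ', Nat.sub_add_cancel (by omega)]

variable {b c d : R}

theorem map_preNormEDS'_le_pow (hB : 2 ≤ B) (hb : v b ≤ B)
    (hinit : ∀ n < 7, v (preNormEDS' b c d n) ≤ B ^ (n * (n - 1))) (n : ℕ) :
    v (preNormEDS' b c d n) ≤ B ^ (n * (n - 1)) := by
  induction n using Nat.strong_induction_on with
  | _ n ih =>
  rcases lt_or_ge n 7 with hn | hn
  · exact hinit n hn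
  have ih' (k : ℕ) (hk : k + 1 < n) : v (preNormEDS' b c d (k + 1)) ≤ B ^ ((k + 1) * k) := by
    simpa using ih (k + 1) hk
  have h1 : v 1 ≤ B := (by simpa using hinit 1 (by norm_num) : v 1 ≤ 1).trans (by linarith)
  have hsel (P : Prop) [Decidable P] :
      v (if P then b else 1) ≤ B ^ 1 ∧ v (if P then 1 else b) ≤ B ^ 1 := by
    split_ifs <;> simp [hb, h1]
  obtain ⟨m, rfl | rfl⟩ : ∃ m, n = 2 * (m + 4) ∨ n = 2 * (m + 2) + 1 := by
    rcases Nat.even_or_odd' n with ⟨k, rfl | rfl⟩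
    exacts [⟨k - 4, Or.inl (by omega)⟩, ⟨k - 2, Or.inr (by omega)⟩]
  · rw [show m + 4 = m + 1 + 3 by rfl, preNormEDS'_even]
    refine map_sub_le_pow v hB
      (map_mul_le_pow_add v (map_mul_le_pow_add v
        (map_pow_le_pow_mul v two_ne_zero (ih' (m + 2) (by omega))) (ih' (m + 3) (by omega)))
        (ih' (m + 5) (by omega)))
      (map_mul_le_pow_add v (map_mul_le_pow_add v (ih' (m + 1) (by omega)) (ih' (m + 3) (by omega)))
        (map_pow_le_pow_mul v two_ne_zero (ih' (m + 4) (by omega)))) ?_ ?_ <;>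
    -- exponents of the form `4 m ^ 2 + O(m)`: `omega` compares them with `m ^ 2` as an atom
    · rw [show 2 * (m + 1 + 3) - 1 = 2 * m + 7 by omega]; ring_nf; omega
  · rw [preNormEDS'_odd]
    refine map_sub_le_pow v hB
      (map_mul_le_pow_add v (map_mul_le_pow_add v (ih' (m + 3) (by omega))
        (map_pow_le_pow_mul v three_ne_zero (ih' (m + 1) (by omega)))) (hsel _).1)
      (map_mul_le_pow_add v (map_mul_le_pow_add v (ih' m (by omega))
        (map_pow_le_pow_mul v three_ne_zero (ih' (m + 2) (by omega)))) (hsel _).2) ?_ ?_ <;>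
    · rw [show 2 * (m + 2) + 1 - 1 = 2 * (m + 2) by omega]; ring_nf; omega

theorem exists_map_preNormEDS'_le_pow (hv1 : v 1 ≤ 1) (b c d : R) :
    ∃ B : ℝ, 1 ≤ B ∧ ∀ n, v (preNormEDS' b c d n) ≤ B ^ (n * (n - 1)) := by
  set B := 2 + v b + v c + v d + v (preNormEDS' b c d 5) + v (preNormEDS' b c d 6)
  have := apply_nonneg v b; have := apply_nonneg v c; have := apply_nonneg v d
  have := apply_nonneg v (preNormEDS' b c d 5); have := apply_nonneg v (preNormEDS' b c d 6)
  have hB : 2 ≤ B := by linarith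
  refine ⟨B, by linarith, map_preNormEDS'_le_pow v hB (by linarith) fun n hn => ?_⟩
  have le_B_pow {x : R} (k : ℕ) (hk : 1 ≤ k) (hx : v x ≤ B) : v x ≤ B ^ k :=
    hx.trans (le_self_pow₀ (by linarith) (by omega))
  interval_cases n
  · simp
  · simpa using hv1
  · simpa using hv1.trans (one_le_pow₀ (by linarith))
  · exact le_B_pow _ (by norm_num) (by rw [preNormEDS'_three]; linarith)
  · exact le_B_pow _ (by norm_num) (by rw [preNormEDS'_four]; linarith)
  · exact le_B_pow _ (by norm_num) (by linarith)
  · exact le_B_pow _ (by norm_num) (by linarith)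

end RingSeminorm

theorem WeierstrassCurve.exists_l1Norm_preΨ'_le {R : Type*} [SeminormedCommRing R]
    [NormOneClass R] (W : WeierstrassCurve R) :
    ∃ B : ℝ, 1 ≤ B ∧ ∀ n, (W.preΨ' n).l1Norm ≤ B ^ (n * (n - 1)) :=
  l1Seminorm.exists_map_preNormEDS'_le_pow
    (by rw [l1Seminorm_apply, ← C_1, l1Norm_C, norm_one]) (W.Ψ₂Sq ^ 2) W.Ψ₃ W.preΨ₄

theorem polyLogHeight_le_log {f : ℚ[X]} {M : ℝ} (hM : 1 ≤ M) (hf : f.l1Norm ≤ M) :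
    polyLogHeight f ≤ Real.log M := by
  set S := ⨆ i, |((f.coeff i : ℚ) : ℝ)|
  have hSM : S ≤ M := ciSup_le fun i => by
    rw [← Real.norm_eq_abs, Rat.norm_cast_real]
    exact (norm_coeff_le_l1Norm f i).trans hf
  have hS0 : 0 ≤ S := Real.iSup_nonneg fun i => abs_nonneg _
  have hlogS : Real.log S ≤ Real.log M := by
    rcases hS0.eq_or_lt with hS | hS
    · rw [← hS, Real.log_zero]; exact Real.log_nonneg hM
    · exact Real.log_le_log hS hSM
  exact max_le (Real.log_nonneg hM) hlogS

theorem stmt_5_general (W : WeierstrassCurve ℚ) :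
    ∃ c : ℝ, ∀ n : ℕ, 1 ≤ n → polyLogHeight (paperPsi W n) ≤ c * (n : ℝ) ^ 2 := by
  obtain ⟨B, hB, hW⟩ := W.exists_l1Norm_preΨ'_le
  refine ⟨Real.log 2 + Real.log B, fun n hn => ?_⟩
  have hpow : 1 ≤ B ^ (n * (n - 1)) := one_le_pow₀ hB
  have hPsi : (paperPsi W n).l1Norm ≤ 2 * B ^ (n * (n - 1)) := by
    unfold paperPsi
    split_ifs
    · linarith [hW n]
    · calc (2 * W.preΨ' n).l1Norm ≤ (2 : ℚ[X]).l1Norm * (W.preΨ' n).l1Norm := l1Norm_mul_le _ _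
        _ ≤ 2 * B ^ (n * (n - 1)) := by
          rw [← C_ofNat, l1Norm_C, ← Rat.norm_cast_real, Rat.cast_ofNat, Real.norm_ofNat]
          exact mul_le_mul_of_nonneg_left (hW n) zero_le_two
  have hexp : ((n * (n - 1) : ℕ) : ℝ) ≤ (n : ℝ) ^ 2 := by
    rw [sq]; exact_mod_cast Nat.mul_le_mul_left n (Nat.sub_le n 1)
  have hn2 : (1 : ℝ) ≤ (n : ℝ) ^ 2 := one_le_pow₀ (by exact_mod_cast hn)
  calc polyLogHeight (paperPsi W n) ≤ Real.log (2 * B ^ (n * (n - 1))) :=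
        polyLogHeight_le_log (by linarith) hPsi
    _ = Real.log 2 + ((n * (n - 1) : ℕ) : ℝ) * Real.log B := by
        rw [Real.log_mul two_ne_zero (by positivity), Real.log_pow]
    _ ≤ (Real.log 2 + Real.log B) * (n : ℝ) ^ 2 := by
        nlinarith [Real.log_nonneg (one_le_two : (1 : ℝ) ≤ 2), Real.log_nonneg hB]

theorem stmt_5 (a b : ℚ) (hΔ : 4 * a ^ 3 + 27 * b ^ 2 ≠ 0)
    (W : WeierstrassCurve ℚ) (hW : W = ⟨0, 0, 0, a, b⟩) :
    ∃ c : ℝ, ∀ n : ℕ, 1 ≤ n → polyLogHeight (paperPsi W n) ≤ c * (n : ℝ) ^ 2 :=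
  stmt_5_general W
end

section
/- Let E be an elliptic curve Y² = X³ + aX + b over a field 𝕂 of characteristic ≠ 2, 3. The third summation polynomial σ_3(X_1,X_2,X_3) = (X_1−X_2)²X_3² − 2((X_1+X_2)(X_1X_2+a)+2b)X_3 + (X_1X_2−a)² − 4b(X_1+X_2) has the property: for x_1, x_2, x_3 in the algebraic closure of 𝕂, σ_3(x_1,x_2,x_3) = 0 if and only if there exist y_1, y_2, y_3 in the algebraic closure such that (x_i, y_i) ∈ E for i = 1,2,3 and (x_1,y_1)+(x_2,y_2)+(x_3,y_3) = O on E. -/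
/-!
Let `Pᵢ = (xᵢ, yᵢ)` be points on the curve with `x₁ ≠ x₂` and put `D = (x₁ - x₂)² (x₁ + x₂ + x₃)`.
Then `(x₁ - x₂)² σ₃(x₁, x₂, x₃) = ((y₁ - y₂)² - D) ((y₁ + y₂)² - D)`, and `(y₁ - y₂)² = D` says
exactly that `x₃` is the abscissa of `P₁ + P₂`. So `σ₃` vanishes iff `x₃` is the abscissa of
`P₁ + P₂` or of `P₁ - P₂`, i.e. iff for suitable signs of `y₂` and `y₃` the three points sum to `O`.
For `x₁ = x₂` the tangent replaces the chord and `σ₃(x, x, x₃) = (3x² + a)² - (2y)² (x₃ + 2x)`;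
the `2`-torsion case `2y = 0` cannot occur, since nonsingularity there forces `3x² + a ≠ 0`.
-/

open WeierstrassCurve

namespace WeierstrassCurve.Affine

variable {R F : Type*} [CommRing R] [Field F]

/-- Only `a₄` and `a₆` enter: this is the summation polynomial of `W` when `W` is in short normal
form `Y² = X³ + a₄X + a₆`. -/
def summationPoly₃ (W : Affine R) (x₁ x₂ x₃ : R) : R :=
  (x₁ - x₂) ^ 2 * x₃ ^ 2 - 2 * ((x₁ + x₂) * (x₁ * x₂ + W.a₄) + 2 * W.a₆) * x₃
    + (x₁ * x₂ - W.a₄) ^ 2 - 4 * W.a₆ * (x₁ + x₂)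

section ShortNF

variable {W : Affine R} [W.IsShortNF] {x x₁ x₂ x₃ y y₁ y₂ : R}

lemma negY_of_isShortNF (x y : R) : W.negY x y = -y := by
  rw [negY, a₁_of_isShortNF, a₃_of_isShortNF]
  ring

lemma equation_iff_of_isShortNF (x y : R) :
    W.Equation x y ↔ y ^ 2 = x ^ 3 + W.a₄ * x + W.a₆ := by
  rw [equation_iff, a₁_of_isShortNF, a₂_of_isShortNF, a₃_of_isShortNF]
  constructor <;> intro h <;> linear_combination h

lemma sq_sub_mul_summationPoly₃ (h₁ : W.Equation x₁ y₁) (h₂ : W.Equation x₂ y₂) :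
    (x₁ - x₂) ^ 2 * W.summationPoly₃ x₁ x₂ x₃ =
      ((y₁ - y₂) ^ 2 - (x₁ - x₂) ^ 2 * (x₁ + x₂ + x₃)) *
        ((y₁ + y₂) ^ 2 - (x₁ - x₂) ^ 2 * (x₁ + x₂ + x₃)) := by
  rw [equation_iff_of_isShortNF] at h₁ h₂
  rw [summationPoly₃]
  linear_combination (-(y₁ ^ 2 + y₂ ^ 2) - (x₁ ^ 3 + W.a₄ * x₁ + W.a₆)
    - (x₂ ^ 3 + W.a₄ * x₂ + W.a₆) + 2 * (x₁ - x₂) ^ 2 * (x₁ + x₂ + x₃)) * (h₁ + h₂)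
    + 4 * y₂ ^ 2 * h₁ + 4 * (x₁ ^ 3 + W.a₄ * x₁ + W.a₆) * h₂

lemma summationPoly₃_self (h : W.Equation x y) :
    W.summationPoly₃ x x x₃ = (3 * x ^ 2 + W.a₄) ^ 2 - (2 * y) ^ 2 * (x₃ + 2 * x) := by
  rw [equation_iff_of_isShortNF] at h
  rw [summationPoly₃]
  linear_combination (4 * x₃ + 8 * x) * h

end ShortNF

section Field

variable {W : Affine F} {x x₁ x₂ x₃ y y₁ y₂ : F}

lemma exists_add_add_some_eq_zero_iff [DecidableEq F] {h₁ : W.Nonsingular x₁ y₁}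
    {h₂ : W.Nonsingular x₂ y₂} :
    (∃ (y₃ : F) (h₃ : W.Nonsingular x₃ y₃), Point.some _ _ h₁ + Point.some _ _ h₂ +
        Point.some _ _ h₃ = 0) ↔
      ¬(x₁ = x₂ ∧ y₁ = W.negY x₂ y₂) ∧ x₃ = W.addX x₁ x₂ (W.slope x₁ x₂ y₁ y₂) := by
  constructor
  · rintro ⟨y₃, h₃, hsum⟩
    have hsum' := eq_neg_of_add_eq_zero_left hsum
    rw [Point.neg_some] at hsum'
    by_cases hxy : x₁ = x₂ ∧ y₁ = W.negY x₂ y₂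
    · rw [Point.add_of_Y_eq hxy.1 hxy.2] at hsum'
      exact absurd hsum'.symm (Point.some_ne_zero _)
    · rw [Point.add_some hxy, Point.some.injEq] at hsum'
      exact ⟨hxy, hsum'.1.symm⟩
  · rintro ⟨hxy, rfl⟩
    exact ⟨_, (nonsingular_neg ..).mpr (nonsingular_add h₁ h₂ hxy), by
      rw [Point.add_some hxy]; exact add_neg_cancel _⟩

variable [W.IsShortNF]

lemma isElliptic_of_isShortNF (h2 : (2 : F) ≠ 0) (hΔ : 4 * W.a₄ ^ 3 + 27 * W.a₆ ^ 2 ≠ 0) :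
    W.IsElliptic := by
  refine ⟨isUnit_iff_ne_zero.mpr ?_⟩
  rw [Δ_of_isShortNF, show (-16 : F) = -2 ^ 4 by norm_num]
  exact mul_ne_zero (neg_ne_zero.mpr (pow_ne_zero 4 h2)) hΔ

lemma exists_equation_of_isShortNF [IsAlgClosed F] (x : F) : ∃ y, W.Equation x y := by
  obtain ⟨y, hy⟩ := IsAlgClosed.exists_pow_nat_eq (x ^ 3 + W.a₄ * x + W.a₆) two_pos
  exact ⟨y, (equation_iff_of_isShortNF x y).mpr hy⟩

lemma Y_ne_negY_of_summationPoly₃_self_eq_zero (h : W.Nonsingular x y)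
    (hσ : W.summationPoly₃ x x x₃ = 0) : y ≠ W.negY x y := by
  intro hy
  rw [negY_of_isShortNF] at hy
  have h2y : 2 * y = 0 := by linear_combination hy
  rw [summationPoly₃_self h.1, h2y] at hσ
  have htangent : 3 * x ^ 2 + W.a₄ = 0 :=
    pow_eq_zero_iff two_ne_zero |>.mp (by linear_combination hσ)
  rw [nonsingular_iff, a₁_of_isShortNF, a₂_of_isShortNF, a₃_of_isShortNF] at h
  rcases h.2 with h | h
  · exact h (by linear_combination -htangent)
  · exact h (by linear_combination hy)

variable [DecidableEq F]

lemma eq_addX_iff_of_X_ne (hx : x₁ ≠ x₂) :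
    x₃ = W.addX x₁ x₂ (W.slope x₁ x₂ y₁ y₂) ↔
      (y₁ - y₂) ^ 2 = (x₁ - x₂) ^ 2 * (x₁ + x₂ + x₃) := by
  have hd : x₁ - x₂ ≠ 0 := sub_ne_zero.mpr hx
  rw [addX, slope_of_X_ne hx, a₁_of_isShortNF, a₂_of_isShortNF]
  constructor <;> intro h
  · field_simp at h
    linear_combination -h
  · field_simp
    linear_combination -h

lemma eq_addX_self_iff (h : W.Equation x y) (hy : y ≠ W.negY x y) :
    x₃ = W.addX x x (W.slope x x y y) ↔ W.summationPoly₃ x x x₃ = 0 := by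
  have h2y : 2 * y ≠ 0 := fun h2y ↦ hy (by rw [negY_of_isShortNF]; linear_combination h2y)
  have h2 : (2 : F) ≠ 0 := left_ne_zero_of_mul h2y
  have hy0 : y ≠ 0 := right_ne_zero_of_mul h2y
  have hℓ : W.slope x x y y = (3 * x ^ 2 + W.a₄) / (2 * y) := by
    rw [slope_of_Y_ne rfl hy, negY_of_isShortNF, a₁_of_isShortNF, a₂_of_isShortNF]
    ring
  rw [addX, hℓ, summationPoly₃_self h, a₁_of_isShortNF, a₂_of_isShortNF]
  constructor <;> intro h
  · field_simp at h
    linear_combination -h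
  · field_simp
    linear_combination -h

lemma summationPoly₃_eq_zero_of_eq_addX (h₁ : W.Equation x₁ y₁) (h₂ : W.Equation x₂ y₂)
    (hxy : ¬(x₁ = x₂ ∧ y₁ = W.negY x₂ y₂)) (hx₃ : x₃ = W.addX x₁ x₂ (W.slope x₁ x₂ y₁ y₂)) :
    W.summationPoly₃ x₁ x₂ x₃ = 0 := by
  by_cases hx : x₁ = x₂
  · have hy : y₁ ≠ W.negY x₂ y₂ := fun hy ↦ hxy ⟨hx, hy⟩
    obtain rfl := Y_eq_of_Y_ne h₁ h₂ hx hy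
    subst hx
    exact (eq_addX_self_iff h₁ hy).mp hx₃
  · have hfactor := sq_sub_mul_summationPoly₃ (x₃ := x₃) h₁ h₂
    rw [(eq_addX_iff_of_X_ne hx).mp hx₃, sub_self, zero_mul] at hfactor
    exact (mul_eq_zero.mp hfactor).resolve_left (pow_ne_zero 2 (sub_ne_zero.mpr hx))

lemma exists_eq_addX_of_summationPoly₃_eq_zero [IsAlgClosed F] [W.IsElliptic]
    (hσ : W.summationPoly₃ x₁ x₂ x₃ = 0) :
    ∃ y₁ y₂, W.Equation x₁ y₁ ∧ W.Equation x₂ y₂ ∧ ¬(x₁ = x₂ ∧ y₁ = W.negY x₂ y₂) ∧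
      x₃ = W.addX x₁ x₂ (W.slope x₁ x₂ y₁ y₂) := by
  obtain ⟨y₁, h₁⟩ := exists_equation_of_isShortNF (W := W) x₁
  by_cases hx : x₁ = x₂
  · subst hx
    have hy := Y_ne_negY_of_summationPoly₃_self_eq_zero (equation_iff_nonsingular.mp h₁) hσ
    exact ⟨y₁, y₁, h₁, h₁, fun h ↦ hy h.2, (eq_addX_self_iff h₁ hy).mpr hσ⟩
  obtain ⟨y₂, h₂⟩ := exists_equation_of_isShortNF (W := W) x₂
  have hfactor := sq_sub_mul_summationPoly₃ (x₃ := x₃) h₁ h₂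
  rw [hσ, mul_zero, eq_comm, mul_eq_zero, sub_eq_zero, sub_eq_zero] at hfactor
  rcases hfactor with hchord | hchord
  · exact ⟨y₁, y₂, h₁, h₂, fun h ↦ hx h.1, (eq_addX_iff_of_X_ne hx).mpr hchord⟩
  · have h₂' : W.Equation x₂ (-y₂) := by rwa [← negY_of_isShortNF (W := W), equation_neg]
    exact ⟨y₁, -y₂, h₁, h₂', fun h ↦ hx h.1,
      (eq_addX_iff_of_X_ne hx).mpr (by rwa [sub_neg_eq_add])⟩

end Field

end WeierstrassCurve.Affine

open Classical in
theorem stmt_8_general (K : Type*) [Field K] (hchar2 : (2 : K) ≠ 0)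
    (a b : K) (hΔ : 4 * a ^ 3 + 27 * b ^ 2 ≠ 0)
    (W : WeierstrassCurve.Affine (AlgebraicClosure K))
    (hW : W = ⟨0, 0, 0, algebraMap K (AlgebraicClosure K) a, algebraMap K (AlgebraicClosure K) b⟩)
    (x₁ x₂ x₃ : AlgebraicClosure K) :
    ((x₁ - x₂) ^ 2 * x₃ ^ 2
        - 2 * ((x₁ + x₂) * (x₁ * x₂ + algebraMap K (AlgebraicClosure K) a)
            + 2 * algebraMap K (AlgebraicClosure K) b) * x₃
        + (x₁ * x₂ - algebraMap K (AlgebraicClosure K) a) ^ 2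
        - 4 * algebraMap K (AlgebraicClosure K) b * (x₁ + x₂) = 0) ↔
      ∃ (y₁ y₂ y₃ : AlgebraicClosure K) (h₁ : W.Nonsingular x₁ y₁)
        (h₂ : W.Nonsingular x₂ y₂) (h₃ : W.Nonsingular x₃ y₃),
        WeierstrassCurve.Affine.Point.some _ _ h₁ + WeierstrassCurve.Affine.Point.some _ _ h₂ +
          WeierstrassCurve.Affine.Point.some _ _ h₃ = 0 := by
  have ha₄ : W.a₄ = algebraMap K (AlgebraicClosure K) a := by rw [hW]
  have ha₆ : W.a₆ = algebraMap K (AlgebraicClosure K) b := by rw [hW]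
  have : W.IsShortNF := by subst hW; exact ⟨rfl, rfl, rfl⟩
  have : W.IsElliptic := by
    refine Affine.isElliptic_of_isShortNF ?_ ?_
    · rw [← map_ofNat (algebraMap K (AlgebraicClosure K))]
      exact (map_ne_zero _).mpr hchar2
    · rw [ha₄, ha₆]
      simpa only [map_add, map_mul, map_pow, map_ofNat] using
        (map_ne_zero (algebraMap K (AlgebraicClosure K))).mpr hΔ
  rw [← ha₄, ← ha₆]
  change W.summationPoly₃ x₁ x₂ x₃ = 0 ↔ _
  constructor
  · intro hσ
    obtain ⟨y₁, y₂, e₁, e₂, hx₃⟩ := Affine.exists_eq_addX_of_summationPoly₃_eq_zero hσ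
    obtain ⟨y₃, h₃, hsum⟩ := (Affine.exists_add_add_some_eq_zero_iff
      (h₁ := Affine.equation_iff_nonsingular.mp e₁)
      (h₂ := Affine.equation_iff_nonsingular.mp e₂)).mpr hx₃
    exact ⟨y₁, y₂, y₃, _, _, h₃, hsum⟩
  · rintro ⟨y₁, y₂, y₃, h₁, h₂, h₃, hsum⟩
    obtain ⟨hxy, hx₃⟩ := Affine.exists_add_add_some_eq_zero_iff.mp ⟨y₃, h₃, hsum⟩
    exact Affine.summationPoly₃_eq_zero_of_eq_addX h₁.1 h₂.1 hxy hx₃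

open Classical in
/-- The third summation polynomial property: over the algebraic closure of a field `𝕂` of
characteristic different from `2` and `3`, `σ₃(x₁,x₂,x₃) = 0` iff there are `y₁, y₂, y₃`
with `(xᵢ, yᵢ)` on the curve `E : Y² = X³ + aX + b` summing to the point at infinity. -/
theorem stmt_8 (K : Type*) [Field K] (hchar2 : (2 : K) ≠ 0) (hchar3 : (3 : K) ≠ 0)
    (a b : K) (hΔ : 4 * a ^ 3 + 27 * b ^ 2 ≠ 0)
    (W : WeierstrassCurve.Affine (AlgebraicClosure K))
    (hW : W = ⟨0, 0, 0, algebraMap K (AlgebraicClosure K) a, algebraMap K (AlgebraicClosure K) b⟩)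
    (x₁ x₂ x₃ : AlgebraicClosure K) :
    ((x₁ - x₂) ^ 2 * x₃ ^ 2
        - 2 * ((x₁ + x₂) * (x₁ * x₂ + algebraMap K (AlgebraicClosure K) a)
            + 2 * algebraMap K (AlgebraicClosure K) b) * x₃
        + (x₁ * x₂ - algebraMap K (AlgebraicClosure K) a) ^ 2
        - 4 * algebraMap K (AlgebraicClosure K) b * (x₁ + x₂) = 0) ↔
      ∃ (y₁ y₂ y₃ : AlgebraicClosure K) (h₁ : W.Nonsingular x₁ y₁)
        (h₂ : W.Nonsingular x₂ y₂) (h₃ : W.Nonsingular x₃ y₃),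
        WeierstrassCurve.Affine.Point.some _ _ h₁ + WeierstrassCurve.Affine.Point.some _ _ h₂ +
          WeierstrassCurve.Affine.Point.some _ _ h₃ = 0 :=
  stmt_8_general K hchar2 a b hΔ W hW x₁ x₂ x₃
end

section
/- Let E be an elliptic curve over ℚ given by a Weierstrass equation Y² = X³ + aX + b, and let σ_n (n ≥ 2) be the summation polynomials of E defined recursively via resultants: σ_n(X_1,…,X_n) = Res_X(σ_{n−k}(X_1,…,X_{n−k−1},X), σ_{k+2}(X_{n−k},…,X_n,X)). Then h(σ_n) = exp(O(n)), i.e., there is an effectively computable constant c depending only on E such that h(σ_n) ≤ exp(c·n) for all n ≥ 2. -/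
open Polynomial

/-- For `P` a polynomial in the variables `X_1, …, X_j` (indexed `0, …, j-1`),
`substLast j offset P` is the univariate polynomial (in the resultant variable `X`) obtained
by substituting the last variable `X_j ↦ X` and renaming the remaining variables
`X_i ↦ X_{i + offset}`. -/
noncomputable def substLast (j offset : ℕ) (P : MvPolynomial ℕ ℚ) :
    Polynomial (MvPolynomial ℕ ℚ) :=
  MvPolynomial.aeval
    (fun i => if i = j - 1 then Polynomial.X else Polynomial.C (MvPolynomial.X (i + offset))) P

/-- The logarithmic height of a multivariate polynomial with rational coefficients. -/
noncomputable def hMv (P : MvPolynomial ℕ ℚ) : ℝ :=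
  max 0 (Real.log (⨆ m : (ℕ →₀ ℕ), |((P.coeff m : ℚ) : ℝ)|))


/-!
Follow two sizes along the recursion: the total degree and the ℓ¹-norm of the coefficients, which
dominates the height and is submultiplicative. `P` has scale `x` (`IsSizeBounded K x P`) if
`2 · deg P ≤ x` and `‖P‖₁ ≤ K ^ x³`. Expanding the Sylvester determinant by the Leibniz formula,
the resultant of inputs of scales `x` and `y` has scale `x · y`: the `d!` permutations cost at most
`K ^ d²`, and the cube leaves room for this and for the powers of the coefficient norms. The
indices add along the recursion (`(n - k) + (k + 2) = n + 2`) while the scales multiply, so `σₙ`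
has scale `B ^ (n - 2)`, where `B` is the scale of `σ₃`; hence `h(σₙ) ≤ B ^ (3 (n - 2)) · log K`.
-/

namespace MvPolynomial

variable {σ R : Type*} [CommRing R] [LinearOrder R]

noncomputable def l1Norm (P : MvPolynomial σ R) : R := ∑ m ∈ P.support, |P.coeff m|

@[simp]
lemma l1Norm_zero : l1Norm (0 : MvPolynomial σ R) = 0 := by simp [l1Norm]

@[simp]
lemma l1Norm_units_smul (u : ℤˣ) (P : MvPolynomial σ R) : l1Norm (u • P) = l1Norm P := by
  rcases Int.units_eq_one_or u with rfl | rfl <;> simp [l1Norm, support_neg]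

variable [IsStrictOrderedRing R]

lemma l1Norm_nonneg (P : MvPolynomial σ R) : 0 ≤ l1Norm P :=
  Finset.sum_nonneg fun m _ => abs_nonneg (P.coeff m)

lemma l1Norm_eq_sum_of_support_subset {P : MvPolynomial σ R} {s : Finset (σ →₀ ℕ)}
    (hs : P.support ⊆ s) : l1Norm P = ∑ m ∈ s, |P.coeff m| :=
  Finset.sum_subset hs fun m _ hm => by rw [notMem_support_iff.mp hm, abs_zero]

lemma abs_coeff_le_l1Norm (P : MvPolynomial σ R) (m : σ →₀ ℕ) : |P.coeff m| ≤ l1Norm P := by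
  classical
  rw [l1Norm_eq_sum_of_support_subset (Finset.subset_insert m P.support)]
  exact Finset.single_le_sum (f := fun m => |P.coeff m|) (fun _ _ => abs_nonneg _)
    (Finset.mem_insert_self _ _)

@[simp]
lemma l1Norm_monomial (s : σ →₀ ℕ) (c : R) : l1Norm (monomial s c) = |c| := by
  classical
  rw [l1Norm_eq_sum_of_support_subset support_monomial_subset, Finset.sum_singleton,
    coeff_monomial, if_pos rfl]

@[simp]
lemma l1Norm_C (c : R) : l1Norm (C c : MvPolynomial σ R) = |c| := l1Norm_monomial 0 c

lemma l1Norm_add_le (P Q : MvPolynomial σ R) : l1Norm (P + Q) ≤ l1Norm P + l1Norm Q := by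
  classical
  rw [l1Norm_eq_sum_of_support_subset support_add,
    l1Norm_eq_sum_of_support_subset (s := P.support ∪ Q.support) Finset.subset_union_left,
    l1Norm_eq_sum_of_support_subset (s := P.support ∪ Q.support) Finset.subset_union_right,
    ← Finset.sum_add_distrib]
  exact Finset.sum_le_sum fun m _ => by rw [coeff_add]; exact abs_add_le _ _

lemma l1Norm_sum_le {ι : Type*} (s : Finset ι) (F : ι → MvPolynomial σ R) :
    l1Norm (∑ i ∈ s, F i) ≤ ∑ i ∈ s, l1Norm (F i) :=
  Finset.le_sum_of_subadditive l1Norm l1Norm_zero.le l1Norm_add_le s F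

lemma l1Norm_mul_le (P Q : MvPolynomial σ R) : l1Norm (P * Q) ≤ l1Norm P * l1Norm Q := by
  calc l1Norm (P * Q)
      = l1Norm (∑ m ∈ P.support, ∑ m' ∈ Q.support,
          monomial m (P.coeff m) * monomial m' (Q.coeff m')) := by
        rw [← Finset.sum_mul_sum, ← as_sum, ← as_sum]
    _ ≤ ∑ m ∈ P.support, ∑ m' ∈ Q.support, |P.coeff m| * |Q.coeff m'| := by
        refine (l1Norm_sum_le _ _).trans <| Finset.sum_le_sum fun m _ =>
          (l1Norm_sum_le _ _).trans <| Finset.sum_le_sum fun m' _ => ?_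
        rw [monomial_mul, l1Norm_monomial, abs_mul]
    _ = l1Norm P * l1Norm Q := (Finset.sum_mul_sum ..).symm

lemma l1Norm_prod_le {ι : Type*} (s : Finset ι) (F : ι → MvPolynomial σ R) :
    l1Norm (∏ i ∈ s, F i) ≤ ∏ i ∈ s, l1Norm (F i) := by
  classical
  induction s using Finset.induction_on with
  | empty => simpa using (l1Norm_C (σ := σ) (1 : R)).le
  | insert a s ha ih =>
    rw [Finset.prod_insert ha, Finset.prod_insert ha]
    exact (l1Norm_mul_le _ _).trans (mul_le_mul_of_nonneg_left ih (l1Norm_nonneg _))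

end MvPolynomial

@[to_additive]
lemma Fin.prod_univ_add_ite_lt {M : Type*} [CommMonoid M] (m n : ℕ) (x y : M) :
    ∏ i : Fin (m + n), (if (i : ℕ) < m then x else y) = x ^ m * y ^ n := by
  simp [Fin.prod_univ_add]

lemma sylvesterMatrix_apply_eq_zero_or_coeff {R : Type*} [CommRing R] (f g : R[X])
    (i j : Fin (g.natDegree + f.natDegree)) :
    sylvesterMatrix f g i j = 0 ∨
      ∃ e, sylvesterMatrix f g i j = (if (i : ℕ) < g.natDegree then f else g).coeff e := by
  unfold sylvesterMatrix
  split_ifs <;> simp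

namespace MvPolynomial

section TotalDegree

variable {n σ R : Type*} [Fintype n] [DecidableEq n] [CommRing R]

lemma totalDegree_det_le (A : Matrix n n (MvPolynomial σ R)) (d : n → ℕ)
    (hA : ∀ i j, (A i j).totalDegree ≤ d i) : A.det.totalDegree ≤ ∑ i, d i := by
  rw [Matrix.det_apply]
  refine totalDegree_finsetSum_le fun π _ => (totalDegree_smul_le _ _).trans ?_
  refine (totalDegree_finsetProd _ _).trans ?_
  rw [← Equiv.sum_comp π d]
  exact Finset.sum_le_sum fun i _ => hA _ _

lemma totalDegree_resultant_le (f g : (MvPolynomial σ R)[X]) {Df Dg : ℕ}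
    (hf : ∀ e, (f.coeff e).totalDegree ≤ Df) (hg : ∀ e, (g.coeff e).totalDegree ≤ Dg) :
    (_root_.resultant f g).totalDegree ≤ g.natDegree * Df + f.natDegree * Dg := by
  have := totalDegree_det_le (sylvesterMatrix f g)
    (fun i => if (i : ℕ) < g.natDegree then Df else Dg) fun i j => by
      rcases sylvesterMatrix_apply_eq_zero_or_coeff f g i j with h | ⟨e, h⟩ <;> rw [h]
      · simp
      · split_ifs
        exacts [hf e, hg e]
  rwa [Fin.sum_univ_add_ite_lt, smul_eq_mul, smul_eq_mul] at this

end TotalDegree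

section L1Norm

variable {n σ R : Type*} [Fintype n] [DecidableEq n] [CommRing R] [LinearOrder R]
  [IsStrictOrderedRing R]

lemma l1Norm_det_le (A : Matrix n n (MvPolynomial σ R)) (r : n → R)
    (hA : ∀ i j, l1Norm (A i j) ≤ r i) :
    l1Norm A.det ≤ (Fintype.card n).factorial * ∏ i, r i := by
  rw [Matrix.det_apply]
  refine (l1Norm_sum_le _ _).trans ?_
  calc ∑ π : Equiv.Perm n, l1Norm (Equiv.Perm.sign π • ∏ i, A (π i) i)
      ≤ ∑ _π : Equiv.Perm n, ∏ i, r i := Finset.sum_le_sum fun π _ => by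
        rw [l1Norm_units_smul, ← Equiv.prod_comp π r]
        exact (l1Norm_prod_le _ _).trans <|
          Finset.prod_le_prod (fun _ _ => l1Norm_nonneg _) fun i _ => hA _ _
    _ = _ := by rw [Finset.sum_const, Finset.card_univ, Fintype.card_perm, nsmul_eq_mul]

lemma l1Norm_resultant_le (f g : (MvPolynomial σ R)[X]) {Sf Sg : R}
    (hf : ∀ e, l1Norm (f.coeff e) ≤ Sf) (hg : ∀ e, l1Norm (g.coeff e) ≤ Sg) :
    l1Norm (_root_.resultant f g) ≤
      (g.natDegree + f.natDegree).factorial * (Sf ^ g.natDegree * Sg ^ f.natDegree) := by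
  have := l1Norm_det_le (sylvesterMatrix f g)
    (fun i => if (i : ℕ) < g.natDegree then Sf else Sg) fun i j => by
      rcases sylvesterMatrix_apply_eq_zero_or_coeff f g i j with h | ⟨e, h⟩ <;> rw [h] <;>
        split_ifs
      exacts [(l1Norm_nonneg _).trans (hf 0), (l1Norm_nonneg _).trans (hg 0), hf e, hg e]
  rwa [Fintype.card_fin, Fin.prod_univ_add_ite_lt] at this

end L1Norm

end MvPolynomial

open MvPolynomial (l1Norm l1Norm_sum_le le_totalDegree totalDegree_resultant_le
  l1Norm_resultant_le)

section SubstLast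

variable (j offset : ℕ) (P : MvPolynomial ℕ ℚ)

lemma substLast_eq_sum : substLast j offset P = ∑ m ∈ P.support,
    C (MvPolynomial.monomial ((m.erase (j - 1)).mapDomain (· + offset)) (P.coeff m)) *
      X ^ m (j - 1) := by
  conv_lhs => rw [substLast, P.as_sum, map_sum]
  refine Finset.sum_congr rfl fun m _ => ?_
  rw [MvPolynomial.aeval_monomial, ← Finsupp.mul_prod_erase' m (j - 1) _ fun _ => pow_zero _,
    if_pos rfl, MvPolynomial.monomial_eq,
    Finsupp.prod_mapDomain_index (fun _ => pow_zero _) fun _ _ _ => pow_add _ _ _,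
    map_mul, map_finsuppProd, Polynomial.algebraMap_apply, MvPolynomial.algebraMap_eq]
  have hφ : ∀ i ∈ (m.erase (j - 1)).support, ∀ k,
      (if i = j - 1 then X else C (MvPolynomial.X (i + offset)) : (MvPolynomial ℕ ℚ)[X]) ^ k =
        C (MvPolynomial.X (i + offset) ^ k) := fun i hi k => by
    have hij : i ≠ j - 1 := by rintro rfl; simp at hi
    rw [if_neg hij, map_pow]
  rw [Finsupp.prod_congr (g2 := fun i k => C (MvPolynomial.X (i + offset) ^ k))
    fun i hi => hφ i hi _]
  ring

lemma coeff_substLast (e : ℕ) : (substLast j offset P).coeff e = ∑ m ∈ P.support,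
    if e = m (j - 1) then
      MvPolynomial.monomial ((m.erase (j - 1)).mapDomain (· + offset)) (P.coeff m)
    else 0 := by
  simp only [substLast_eq_sum, finsetSum_coeff, coeff_C_mul_X_pow]

lemma natDegree_substLast_le : (substLast j offset P).natDegree ≤ P.totalDegree := by
  rw [substLast_eq_sum]
  exact natDegree_sum_le_of_forall_le _ _ fun m hm =>
    (natDegree_C_mul_X_pow_le _ _).trans <| (Finsupp.le_degree _ m).trans (le_totalDegree hm)

lemma totalDegree_coeff_substLast_le (e : ℕ) :
    ((substLast j offset P).coeff e).totalDegree ≤ P.totalDegree := by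
  rw [coeff_substLast]
  refine MvPolynomial.totalDegree_finsetSum_le fun m hm => ?_
  split_ifs
  · refine (MvPolynomial.totalDegree_monomial_le _ _).trans ?_
    refine le_trans ?_ (le_totalDegree hm)
    change Finsupp.degree _ ≤ Finsupp.degree m
    rw [Finsupp.degree_mapDomain]
    exact Finsupp.degree_mono fun i => by
      rw [Finsupp.erase_apply]; split_ifs <;> omega
  · simp

lemma l1Norm_coeff_substLast_le (e : ℕ) :
    l1Norm ((substLast j offset P).coeff e) ≤ l1Norm P := by
  rw [coeff_substLast]
  refine (l1Norm_sum_le _ _).trans <| Finset.sum_le_sum fun m _ => ?_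
  split_ifs <;> simp

end SubstLast

lemma sq_add_cube_mul_le {x y dF dG : ℕ} (hx : 2 ≤ x) (hy : 2 ≤ y) (hdF : 2 * dF ≤ x)
    (hdG : 2 * dG ≤ y) : (dG + dF) ^ 2 + (x ^ 3 * dG + y ^ 3 * dF) ≤ (x * y) ^ 3 := by
  have hxy : 4 ≤ x * y := Nat.mul_le_mul hx hy
  have hd : 2 * (dG + dF) ≤ x * y := by nlinarith
  have h1 : 16 * (dG + dF) ^ 2 ≤ (x * y) ^ 3 := by nlinarith [Nat.mul_le_mul hd hd]
  have h2 : 8 * (x ^ 3 * dG) ≤ (x * y) ^ 3 := by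
    have : 4 ≤ y ^ 2 := by nlinarith
    nlinarith [Nat.mul_le_mul_left (x ^ 3) (Nat.mul_le_mul this hdG)]
  have h3 : 8 * (y ^ 3 * dF) ≤ (x * y) ^ 3 := by
    have : 4 ≤ x ^ 2 := by nlinarith
    nlinarith [Nat.mul_le_mul_left (y ^ 3) (Nat.mul_le_mul this hdF)]
  omega

lemma factorial_le_pow_sq {R : Type*} [CommSemiring R] [PartialOrder R] [IsOrderedRing R]
    {K : R} (hK : 2 ≤ K) (d : ℕ) : (d.factorial : R) ≤ K ^ d ^ 2 := by
  have : d.factorial ≤ 2 ^ d ^ 2 := calc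
    d.factorial ≤ d ^ d := Nat.factorial_le_pow d
    _ ≤ (2 ^ d) ^ d := Nat.pow_le_pow_left Nat.lt_two_pow_self.le d
    _ = 2 ^ d ^ 2 := by rw [← pow_mul, sq]
  calc (d.factorial : R) ≤ ((2 ^ d ^ 2 : ℕ) : R) := Nat.mono_cast this
    _ = 2 ^ d ^ 2 := by push_cast; rfl
    _ ≤ K ^ d ^ 2 := pow_le_pow_left₀ zero_le_two hK _

def IsSizeBounded (K : ℚ) (x : ℕ) (P : MvPolynomial ℕ ℚ) : Prop :=
  2 * P.totalDegree ≤ x ∧ l1Norm P ≤ K ^ x ^ 3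

lemma IsSizeBounded.resultant_substLast {K : ℚ} {x y : ℕ} {P Q : MvPolynomial ℕ ℚ}
    (hK : 2 ≤ K) (hx : 2 ≤ x) (hy : 2 ≤ y) (hP : IsSizeBounded K x P)
    (hQ : IsSizeBounded K y Q) (j j' offset offset' : ℕ) :
    IsSizeBounded K (x * y) (_root_.resultant (substLast j offset P) (substLast j' offset' Q)) := by
  set F := substLast j offset P
  set G := substLast j' offset' Q
  have hdF : 2 * F.natDegree ≤ x := (Nat.mul_le_mul_left 2 (natDegree_substLast_le ..)).trans hP.1
  have hdG : 2 * G.natDegree ≤ y := (Nat.mul_le_mul_left 2 (natDegree_substLast_le ..)).trans hQ.1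
  constructor
  · have := totalDegree_resultant_le F G (totalDegree_coeff_substLast_le j offset P)
      (totalDegree_coeff_substLast_le j' offset' Q)
    nlinarith [hP.1, hQ.1]
  · have hK1 : 1 ≤ K := one_le_two.trans hK
    calc l1Norm (_root_.resultant F G)
        ≤ (G.natDegree + F.natDegree).factorial *
            ((K ^ x ^ 3) ^ G.natDegree * (K ^ y ^ 3) ^ F.natDegree) :=
          l1Norm_resultant_le F G (fun e => (l1Norm_coeff_substLast_le ..).trans hP.2)
            (fun e => (l1Norm_coeff_substLast_le ..).trans hQ.2)
      _ ≤ K ^ (G.natDegree + F.natDegree) ^ 2 *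
            K ^ (x ^ 3 * G.natDegree + y ^ 3 * F.natDegree) := by
          rw [pow_add, pow_mul, pow_mul]
          gcongr
          exact factorial_le_pow_sq hK _
      _ ≤ K ^ (x * y) ^ 3 := by
          rw [← pow_add]
          exact pow_le_pow_right₀ hK1 (sq_add_cube_mul_le hx hy hdF hdG)

lemma isSizeBounded_of_resultant_rec {σ : ℕ → MvPolynomial ℕ ℚ}
    (hrec : ∀ n : ℕ, 4 ≤ n → ∃ k : ℕ, 1 ≤ k ∧ k ≤ n - 3 ∧
      σ n = _root_.resultant (substLast (n - k) 0 (σ (n - k)))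
        (substLast (k + 2) (n - k - 1) (σ (k + 2))))
    {K : ℚ} {B : ℕ} (hK : 2 ≤ K) (hB : 2 ≤ B) (h3 : IsSizeBounded K B (σ 3)) :
    ∀ n, 3 ≤ n → IsSizeBounded K (B ^ (n - 2)) (σ n) := by
  have hpow : ∀ m, 1 ≤ m → 2 ≤ B ^ m := fun m hm => hB.trans (Nat.le_self_pow (by omega) B)
  intro n
  induction n using Nat.strong_induction_on with
  | _ n ih =>
    intro hn
    rcases hn.eq_or_lt with rfl | hn
    · simpa using h3
    obtain ⟨k, hk1, hk3, hσ⟩ := hrec n hn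
    have hB_pow : B ^ (n - k - 2) * B ^ (k + 2 - 2) = B ^ (n - 2) := by
      rw [← pow_add]; congr 1; omega
    rw [hσ, ← hB_pow]
    exact (ih (n - k) (by omega) (by omega)).resultant_substLast hK (hpow _ (by omega))
      (hpow _ (by omega)) (ih (k + 2) (by omega) (by omega)) ..

lemma hMv_le_of_isSizeBounded {K : ℚ} {x : ℕ} {P : MvPolynomial ℕ ℚ} (hK : 1 ≤ K)
    (hP : IsSizeBounded K x P) : hMv P ≤ (x ^ 3 : ℕ) * Real.log K := by
  have hS : (1 : ℝ) ≤ (K : ℝ) ^ x ^ 3 := one_le_pow₀ (by exact_mod_cast hK)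
  have hcoeff : ∀ m, |((P.coeff m : ℚ) : ℝ)| ≤ (K : ℝ) ^ x ^ 3 := fun m => by
    exact_mod_cast (MvPolynomial.abs_coeff_le_l1Norm P m).trans hP.2
  have hsup := ciSup_le hcoeff
  rw [← Real.log_pow, hMv]
  refine max_le (Real.log_nonneg hS) ?_
  rcases (Real.iSup_nonneg fun m => abs_nonneg _).eq_or_lt with h0 | hpos
  · rw [← h0, Real.log_zero]; exact Real.log_nonneg hS
  · exact Real.log_le_log hpos hsup

lemma exists_pow_mul_le_exp {b : ℝ} (hb : 0 < b) (y : ℝ) :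
    ∃ c : ℝ, ∀ n : ℕ, 1 ≤ n → b ^ n * y ≤ Real.exp (c * n) := by
  refine ⟨Real.log b + Real.log (max 1 y), fun n hn => ?_⟩
  rw [add_mul, Real.exp_add, ← Real.rpow_def_of_pos hb, ← Real.rpow_def_of_pos (by positivity),
    Real.rpow_natCast, Real.rpow_natCast]
  gcongr
  exact (le_max_right 1 y).trans (le_self_pow₀ (le_max_left 1 y) (by omega))

theorem stmt_9_general (σ : ℕ → MvPolynomial ℕ ℚ)
    (hrec : ∀ n : ℕ, 4 ≤ n → ∃ k : ℕ, 1 ≤ k ∧ k ≤ n - 3 ∧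
      σ n = _root_.resultant (substLast (n - k) 0 (σ (n - k)))
        (substLast (k + 2) (n - k - 1) (σ (k + 2)))) :
    ∃ c : ℝ, ∀ n : ℕ, 2 ≤ n → hMv (σ n) ≤ Real.exp (c * (n : ℝ)) := by
  set B := max 2 (2 * (σ 3).totalDegree)
  set K := max 2 (l1Norm (σ 3))
  have hB : 2 ≤ B := le_max_left ..
  have hK : 2 ≤ K := le_max_left ..
  have h3 : IsSizeBounded K B (σ 3) :=
    ⟨le_max_right .., (le_max_right ..).trans <|
      le_self_pow₀ (one_le_two.trans hK) (pow_pos (by omega) 3).ne'⟩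
  have hσ := isSizeBounded_of_resultant_rec hrec hK hB h3
  -- the recursion never reaches `σ 2`, so its height goes into the constant
  set y := max (hMv (σ 2)) (Real.log K)
  obtain ⟨c, hc⟩ := exists_pow_mul_le_exp (b := (B : ℝ) ^ 3) (by positivity) y
  have hB1 : (1 : ℝ) ≤ B := by exact_mod_cast one_le_two.trans hB
  refine ⟨c, fun n hn => le_trans ?_ (hc n (by omega))⟩
  have hy : 0 ≤ y := (le_max_left 0 _).trans (le_max_left (hMv (σ 2)) _)
  rcases hn.eq_or_lt with rfl | hn
  · exact (le_max_left ..).trans (le_mul_of_one_le_left hy (one_le_pow₀ (one_le_pow₀ hB1)))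
  calc hMv (σ n) ≤ ((B ^ (n - 2)) ^ 3 : ℕ) * Real.log K :=
        hMv_le_of_isSizeBounded (one_le_two.trans hK) (hσ n hn)
    _ ≤ ((B : ℝ) ^ 3) ^ n * y := by
        push_cast
        rw [← pow_mul, ← pow_mul]
        exact mul_le_mul (pow_le_pow_right₀ hB1 (by omega)) (le_max_right ..)
          (Real.log_nonneg (by exact_mod_cast one_le_two.trans hK)) (by positivity)

/-- The summation polynomials `σₙ` of `E : Y² = X³ + aX + b`, defined by `σ₂ = X₁ − X₂`, the
explicit formula for `σ₃`, and recursively via resultants, satisfy `h(σₙ) = exp(O(n))`. -/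
theorem stmt_9 (a b : ℚ) (hΔ : 4 * a ^ 3 + 27 * b ^ 2 ≠ 0)
    (σ : ℕ → MvPolynomial ℕ ℚ)
    (h2 : σ 2 = MvPolynomial.X 0 - MvPolynomial.X 1)
    (h3 : σ 3 = (MvPolynomial.X 0 - MvPolynomial.X 1) ^ 2 * (MvPolynomial.X 2) ^ 2
      - 2 * ((MvPolynomial.X 0 + MvPolynomial.X 1) *
          (MvPolynomial.X 0 * MvPolynomial.X 1 + MvPolynomial.C a) +
          2 * MvPolynomial.C b) * MvPolynomial.X 2
      + (MvPolynomial.X 0 * MvPolynomial.X 1 - MvPolynomial.C a) ^ 2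
      - 4 * MvPolynomial.C b * (MvPolynomial.X 0 + MvPolynomial.X 1))
    (hrec : ∀ n : ℕ, 4 ≤ n → ∃ k : ℕ, 1 ≤ k ∧ k ≤ n - 3 ∧
      σ n = _root_.resultant (substLast (n - k) 0 (σ (n - k)))
        (substLast (k + 2) (n - k - 1) (σ (k + 2)))) :
    ∃ c : ℝ, ∀ n : ℕ, 2 ≤ n → hMv (σ n) ≤ Real.exp (c * (n : ℝ)) :=
  stmt_9_general σ hrec
end
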